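/- arXiv:1504.03623 — 2 statements merged into one kernel-verified Lean document; each statement's English description precedes it below -/
import Mathlib

section
/- The indexed family 𝓕 = {F_n}_{n∈ℕ} with F_n = [0, 2^n] is PSD[O]-learnable and PSD[T]-learnable, but not PSD-learnable. -/
/-!
Common framework: indexed families of c.e. sets, enumerations (texts),
learning machines with run-time, membership-oracle machines, teachers,
and the learning criteria PRT/PSD/PMC/PCS with oracle/teacher variants.
-/

namespace TeachLearn

attribute [local instance] Classical.propDecidable

/-- The initial segment (finite string) of length `n` of the infinite sequence `f`. -/
def str (f : ℕ → ℕ) (n : ℕ) : List ℕ := (List.range n).map f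

/-- `f` is an enumeration (a text) of the set `A`: its set of values is exactly `A`. -/
def IsEnum (f : ℕ → ℕ) (A : Set ℕ) : Prop := Set.range f = A

/-- An indexed family: a uniformly computably enumerable sequence of nonempty
subsets of `ℕ`. -/
structure IndexedFamily where
  F : ℕ → Set ℕ
  nonempty : ∀ n, (F n).Nonempty
  uce : REPred fun p : ℕ × ℕ => p.1 ∈ F p.2

namespace IndexedFamily

/-- `A` is a member of the indexed family `𝓕`. -/
def Mem (𝓕 : IndexedFamily) (A : Set ℕ) : Prop := ∃ n, 𝓕.F n = A

/-- The minimal index of `A` in the indexed family `𝓕`. -/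
noncomputable def mi (𝓕 : IndexedFamily) (A : Set ℕ) : ℕ := sInf {n | 𝓕.F n = A}

end IndexedFamily

/-- A learning machine: a partial computable map from finite strings to
hypotheses, together with a (cumulative) run-time function.  The run-time is
defined exactly when the machine halts, dominates the length of the input read
as well as the size of the output produced, and is monotone along prefixes
(time is accumulated while reading an enumeration). -/
structure Machine where
  eval : List ℕ →. ℕ
  partrec : Partrec eval
  time : List ℕ →. ℕ
  time_dom : ∀ σ, (time σ).Dom ↔ (eval σ).Dom
  length_le_time : ∀ ⦃σ t⦄, t ∈ time σ → σ.length ≤ t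
  size_le_time : ∀ ⦃σ t h⦄, t ∈ time σ → h ∈ eval σ → Nat.size h ≤ t
  time_mono : ∀ ⦃σ τ s t⦄, σ <+: τ → s ∈ time σ → t ∈ time τ → s ≤ t

/-- A teacher: a computable, prefix-monotone map on finite strings whose
output consists of elements of its input. -/
structure Teacher where
  t : List ℕ → List ℕ
  computable : Computable t
  mono : ∀ ⦃σ τ⦄, σ <+: τ → t σ <+: t τ
  content_sub : ∀ ⦃σ x⦄, x ∈ t σ → x ∈ σ

/-- A learning machine with access to a membership oracle, modeled
interactively: `step (σ, ans)` is the machine's action on input string `σ`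
after having received the list `ans` of oracle answers so far; an even value
`2 * q` asks the oracle whether `q` belongs to the target, while an odd value
`2 * h + 1` halts the interaction with hypothesis `h`.  The run-time dominates
the length of the input read, the number of oracle queries asked, and the size
of the value produced, and is monotone (cumulative). -/
structure OMachine where
  step : List ℕ × List Bool →. ℕ
  partrec : Partrec step
  time : List ℕ × List Bool →. ℕ
  time_dom : ∀ x, (time x).Dom ↔ (step x).Dom
  length_le_time : ∀ ⦃x t⦄, t ∈ time x → x.1.length ≤ t
  queries_le_time : ∀ ⦃x t⦄, t ∈ time x → x.2.length ≤ t
  size_le_time : ∀ ⦃x t v⦄, t ∈ time x → v ∈ step x → Nat.size v ≤ t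
  time_mono : ∀ ⦃σ τ a b s t⦄, σ <+: τ → a <+: b →
    s ∈ time (σ, a) → t ∈ time (τ, b) → s ≤ t

namespace OMachine

/-- The answer lists reachable in the interaction of the machine `M` with the
membership oracle for `A` on the input string `σ`. -/
inductive Reach (M : OMachine) (A : Set ℕ) (σ : List ℕ) : List Bool → Prop
  | nil : Reach M A σ []
  | query {ans q} : Reach M A σ ans → (2 * q) ∈ M.step (σ, ans) →
      Reach M A σ (ans ++ [decide (q ∈ A)])

/-- `M.Out A σ h ans`: on input `σ`, interacting with the membership oracle
for `A`, the machine `M` receives the oracle answers `ans` and halts with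
hypothesis `h`. -/
def Out (M : OMachine) (A : Set ℕ) (σ : List ℕ) (h : ℕ) (ans : List Bool) : Prop :=
  M.Reach A σ ans ∧ (2 * h + 1) ∈ M.step (σ, ans)

/-- With oracle `A`, on the stage inputs `I`, the machine `M` outputs the
hypothesis `h` from stage `n` onwards. -/
def Settles (M : OMachine) (A : Set ℕ) (I : ℕ → List ℕ) (h n : ℕ) : Prop :=
  ∀ m, n ≤ m → ∃ ans, M.Out A (I m) h ans

end OMachine

/-- A teacher for the teacher-and-oracle model: it additionally has access to
the oracle answers received so far by the learner. -/
structure OTeacher where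
  t : List ℕ → List Bool → List ℕ
  computable : Computable₂ t
  mono : ∀ ⦃σ τ a b⦄, σ <+: τ → a <+: b → t σ a <+: t τ b
  content_sub : ∀ ⦃σ a x⦄, x ∈ t σ a → x ∈ σ

/-- On the stage inputs `I`, the machine `M` outputs the hypothesis `h` from
stage `n` onwards. -/
def Machine.Settles (M : Machine) (I : ℕ → List ℕ) (h n : ℕ) : Prop :=
  ∀ m, n ≤ m → M.eval (I m) = Part.some h

/-- Settling for the teacher-and-oracle model: `hist m` records the oracle
answers the learner received at stage `m - 1`, which the teacher sees at
stage `m`.  From stage `n` on, the learner outputs `h`. -/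
def OMachine.TOSettles (M : OMachine) (T : OTeacher) (A : Set ℕ) (f : ℕ → ℕ)
    (hist : ℕ → List Bool) (h n : ℕ) : Prop :=
  ∀ m, n ≤ m → M.Out A (T.t (str f m) (hist m)) h (hist (m + 1))

/-! ### Polynomial run-time (PRT) -/

/-- `M` converges to the hypothesis `h` on the stage inputs `I` within fewer
than `B` computation steps. -/
def Machine.PRTIdentifies (M : Machine) (I : ℕ → List ℕ) (h B : ℕ) : Prop :=
  ∃ n, M.Settles I h n ∧ ∃ t, t ∈ M.time (I n) ∧ t < B

/-- Oracle version of `Machine.PRTIdentifies`; the run-time bound also bounds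
the oracle use (by `queries_le_time`). -/
def OMachine.PRTIdentifies (M : OMachine) (A : Set ℕ) (I : ℕ → List ℕ) (h B : ℕ) : Prop :=
  ∃ n, M.Settles A I h n ∧
    ∃ ans t, M.Out A (I n) h ans ∧ t ∈ M.time (I n, ans) ∧ t < B

/-- `M` PRT-learns `𝓕` with polynomial bound `p`. -/
def PRTLearnsWith (M : Machine) (p : Polynomial ℕ) (𝓕 : IndexedFamily) : Prop :=
  ∀ A, 𝓕.Mem A → ∀ f, IsEnum f A →
    ∃ h, 𝓕.F h = A ∧ M.PRTIdentifies (str f) h (p.eval (𝓕.mi A))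

/-- `𝓕` is PRT-learnable. -/
def PRT (𝓕 : IndexedFamily) : Prop := ∃ M p, PRTLearnsWith M p 𝓕

/-- The learner-teacher pair `(M, T)` PRT-learns `𝓕` with polynomial bound `p`. -/
def PRTTLearnsWith (M : Machine) (T : Teacher) (p : Polynomial ℕ) (𝓕 : IndexedFamily) : Prop :=
  ∀ A, 𝓕.Mem A → ∀ f, IsEnum f A →
    ∃ h, 𝓕.F h = A ∧ M.PRTIdentifies (fun m => T.t (str f m)) h (p.eval (𝓕.mi A))

/-- `𝓕` is PRT[T]-learnable. -/
def PRTT (𝓕 : IndexedFamily) : Prop := ∃ M T p, PRTTLearnsWith M T p 𝓕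

/-- `𝓕` is PRT[O]-learnable. -/
def PRTO (𝓕 : IndexedFamily) : Prop :=
  ∃ (M : OMachine) (p : Polynomial ℕ), ∀ A, 𝓕.Mem A → ∀ f, IsEnum f A →
    ∃ h, 𝓕.F h = A ∧ M.PRTIdentifies A (str f) h (p.eval (𝓕.mi A))

/-- `𝓕` is PRT[T,O]-learnable. -/
def PRTTO (𝓕 : IndexedFamily) : Prop :=
  ∃ (M : OMachine) (T : OTeacher) (p : Polynomial ℕ),
    ∀ A, 𝓕.Mem A → ∀ f, IsEnum f A →
      ∃ h, 𝓕.F h = A ∧ ∃ hist : ℕ → List Bool, hist 0 = [] ∧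
        ∃ n, M.TOSettles T A f hist h n ∧
          ∃ t, t ∈ M.time (T.t (str f n) (hist n), hist (n + 1)) ∧ t < p.eval (𝓕.mi A)

/-! ### Polynomial size dataset (PSD) -/

/-- `M` converges to `h` on an initial stage whose input contains fewer than
`B` distinct elements. -/
def Machine.PSDIdentifies (M : Machine) (I : ℕ → List ℕ) (h B : ℕ) : Prop :=
  ∃ n, M.Settles I h n ∧ (I n).toFinset.card < B

/-- Oracle version of `Machine.PSDIdentifies`; the oracle use is also bounded. -/
def OMachine.PSDIdentifies (M : OMachine) (A : Set ℕ) (I : ℕ → List ℕ) (h B : ℕ) : Prop :=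
  ∃ n, M.Settles A I h n ∧ (I n).toFinset.card < B ∧
    ∃ ans, M.Out A (I n) h ans ∧ ans.length ≤ B

/-- `𝓕` is PSD-learnable. -/
def PSD (𝓕 : IndexedFamily) : Prop :=
  ∃ (M : Machine) (p : Polynomial ℕ), ∀ A, 𝓕.Mem A → ∀ f, IsEnum f A →
    ∃ h, 𝓕.F h = A ∧ M.PSDIdentifies (str f) h (p.eval (𝓕.mi A))

/-- `𝓕` is PSD[T]-learnable. -/
def PSDT (𝓕 : IndexedFamily) : Prop :=
  ∃ (M : Machine) (T : Teacher) (p : Polynomial ℕ), ∀ A, 𝓕.Mem A → ∀ f, IsEnum f A →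
    ∃ h, 𝓕.F h = A ∧ M.PSDIdentifies (fun m => T.t (str f m)) h (p.eval (𝓕.mi A))

/-- `𝓕` is PSD[O]-learnable. -/
def PSDO (𝓕 : IndexedFamily) : Prop :=
  ∃ (M : OMachine) (p : Polynomial ℕ), ∀ A, 𝓕.Mem A → ∀ f, IsEnum f A →
    ∃ h, 𝓕.F h = A ∧ M.PSDIdentifies A (str f) h (p.eval (𝓕.mi A))

/-- `𝓕` is PSD[T,O]-learnable. -/
def PSDTO (𝓕 : IndexedFamily) : Prop :=
  ∃ (M : OMachine) (T : OTeacher) (p : Polynomial ℕ),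
    ∀ A, 𝓕.Mem A → ∀ f, IsEnum f A →
      ∃ h, 𝓕.F h = A ∧ ∃ hist : ℕ → List Bool, hist 0 = [] ∧
        ∃ n, M.TOSettles T A f hist h n ∧
          (T.t (str f n) (hist n)).toFinset.card < p.eval (𝓕.mi A) ∧
          (hist (n + 1)).length ≤ p.eval (𝓕.mi A)

/-! ### Polynomial mind-changes (PMC) -/

/-- The set of positions at which the hypothesis stream `g` changes its mind. -/
def MindChanges (g : ℕ → ℕ) : Set ℕ := {i | g i ≠ g (i + 1)}

/-- The hypothesis stream `g` changes its mind at most `B` times, and the only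
hypothesis appearing infinitely often in it is an index of `A` in `𝓕`. -/
def PMCCriterion (𝓕 : IndexedFamily) (A : Set ℕ) (g : ℕ → ℕ) (B : ℕ) : Prop :=
  (MindChanges g).Finite ∧ (MindChanges g).ncard ≤ B ∧
    ∀ h, {i | g i = h}.Infinite → 𝓕.F h = A

/-- `𝓕` is PMC-learnable. -/
def PMC (𝓕 : IndexedFamily) : Prop :=
  ∃ (M : Machine) (p : Polynomial ℕ), ∀ A, 𝓕.Mem A → ∀ f, IsEnum f A →
    ∃ g : ℕ → ℕ, (∀ m, M.eval (str f m) = Part.some (g m)) ∧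
      PMCCriterion 𝓕 A g (p.eval (𝓕.mi A))

/-- `𝓕` is PMC[T]-learnable. -/
def PMCT (𝓕 : IndexedFamily) : Prop :=
  ∃ (M : Machine) (T : Teacher) (p : Polynomial ℕ), ∀ A, 𝓕.Mem A → ∀ f, IsEnum f A →
    ∃ g : ℕ → ℕ, (∀ m, M.eval (T.t (str f m)) = Part.some (g m)) ∧
      PMCCriterion 𝓕 A g (p.eval (𝓕.mi A))

/-- `𝓕` is PMC[O]-learnable. -/
def PMCO (𝓕 : IndexedFamily) : Prop :=
  ∃ (M : OMachine) (p : Polynomial ℕ), ∀ A, 𝓕.Mem A → ∀ f, IsEnum f A →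
    ∃ g : ℕ → ℕ,
      (∀ m, ∃ ans, M.Out A (str f m) (g m) ans ∧ ans.length ≤ p.eval (𝓕.mi A)) ∧
      PMCCriterion 𝓕 A g (p.eval (𝓕.mi A))

/-- `𝓕` is PMC[T,O]-learnable. -/
def PMCTO (𝓕 : IndexedFamily) : Prop :=
  ∃ (M : OMachine) (T : OTeacher) (p : Polynomial ℕ),
    ∀ A, 𝓕.Mem A → ∀ f, IsEnum f A →
      ∃ hist : ℕ → List Bool, hist 0 = [] ∧
        ∃ g : ℕ → ℕ,
          (∀ m, M.Out A (T.t (str f m) (hist m)) (g m) (hist (m + 1)) ∧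
            (hist (m + 1)).length ≤ p.eval (𝓕.mi A)) ∧
          PMCCriterion 𝓕 A g (p.eval (𝓕.mi A))

/-! ### Polynomial size characteristic sample (PCS) -/

/-- `𝓕` is PCS-learnable: there are a machine, a polynomial bound and an
assignment of a characteristic sample to each member of `𝓕`. -/
def PCS (𝓕 : IndexedFamily) : Prop :=
  ∃ (M : Machine) (p : Polynomial ℕ) (S : Set ℕ → Finset ℕ),
    ∀ A, 𝓕.Mem A → ↑(S A) ⊆ A ∧ (S A).card < p.eval (𝓕.mi A) ∧
      ∃ e, 𝓕.F e = A ∧ ∀ f, IsEnum f A → ∀ n, (∀ x ∈ S A, x ∈ str f n) →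
        M.eval (str f n) = Part.some e

/-- `𝓕` is PCS[O]-learnable. -/
def PCSO (𝓕 : IndexedFamily) : Prop :=
  ∃ (M : OMachine) (p : Polynomial ℕ) (S : Set ℕ → Finset ℕ),
    ∀ A, 𝓕.Mem A → ↑(S A) ⊆ A ∧ (S A).card < p.eval (𝓕.mi A) ∧
      ∃ e, 𝓕.F e = A ∧ ∀ f, IsEnum f A → ∀ n, (∀ x ∈ S A, x ∈ str f n) →
        ∃ ans, M.Out A (str f n) e ans ∧ ans.length ≤ p.eval (𝓕.mi A)

/-- `𝓕` is PCS[T]-learnable: the characteristic sample must eventually appear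
in the teacher's output stream, after which the learner locks onto a correct
index. -/
def PCST (𝓕 : IndexedFamily) : Prop :=
  ∃ (M : Machine) (T : Teacher) (p : Polynomial ℕ) (S : Set ℕ → Finset ℕ),
    ∀ A, 𝓕.Mem A → ↑(S A) ⊆ A ∧ (S A).card < p.eval (𝓕.mi A) ∧
      ∃ e, 𝓕.F e = A ∧ ∀ f, IsEnum f A →
        (∃ n, ∀ x ∈ S A, x ∈ T.t (str f n)) ∧
        ∀ n, (∀ x ∈ S A, x ∈ T.t (str f n)) → M.eval (T.t (str f n)) = Part.some e

/-- `𝓕` is PCS[T,O]-learnable. -/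
def PCSTO (𝓕 : IndexedFamily) : Prop :=
  ∃ (M : OMachine) (T : OTeacher) (p : Polynomial ℕ) (S : Set ℕ → Finset ℕ),
    ∀ A, 𝓕.Mem A → ↑(S A) ⊆ A ∧ (S A).card < p.eval (𝓕.mi A) ∧
      ∃ e, 𝓕.F e = A ∧ ∀ f, IsEnum f A →
        ∃ hist : ℕ → List Bool, hist 0 = [] ∧
          (∃ n, ∀ x ∈ S A, x ∈ T.t (str f n) (hist n)) ∧
          ∀ n, (∀ x ∈ S A, x ∈ T.t (str f n) (hist n)) →
            M.Out A (T.t (str f n) (hist n)) e (hist (n + 1)) ∧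
            (hist (n + 1)).length ≤ p.eval (𝓕.mi A)


/-!
Without help, a learner that has converged on a text for `[0, 2^n]` can be fed a continuation
of that text into one for `[0, 2^(n+1)]`; it must then change its mind after having seen all
`2^n + 1` elements of the smaller set, which no polynomial in `n + 1` bounds.

With a membership oracle the learner asks about `2, 4, 8, …` until the first negative answer,
which takes `n + 1` queries. A teacher can pass on only those elements that at least double
the largest one passed so far: at most `n + 1` elements, and once `2^n` has appeared the largest
passed element `m` satisfies `2^(n-1) < m ≤ 2^n`, so the learner reads off `n = ⌈log₂ m⌉`.
-/

section Strings

theorem str_succ (f : ℕ → ℕ) (m : ℕ) : str f (m + 1) = str f m ++ [f m] := by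
  simp [str, List.range_succ]

theorem str_prefix_str (f : ℕ → ℕ) {m m' : ℕ} (h : m ≤ m') : str f m <+: str f m' := by
  induction m', h using Nat.le_induction with
  | base => exact List.prefix_refl _
  | succ m' _ ih => exact ih.trans ⟨[f m'], (str_succ f m').symm⟩

theorem mem_str {f : ℕ → ℕ} {x m : ℕ} : x ∈ str f m ↔ ∃ i < m, f i = x := by
  simp [str]

theorem exists_isEnum {A : Set ℕ} (hA : A.Nonempty) : ∃ f, IsEnum f A :=
  let ⟨f, hf⟩ := A.to_countable.exists_eq_range hA
  ⟨f, hf.symm⟩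

theorem exists_forall_mem_str {f : ℕ → ℕ} (A : Finset ℕ) (hA : ↑A ⊆ Set.range f) :
    ∃ s, ∀ x ∈ A, x ∈ str f s := by
  induction A using Finset.induction_on with
  | empty => exact ⟨0, by simp⟩
  | insert a A _ ih =>
    obtain ⟨i, rfl⟩ := hA (Finset.mem_insert_self _ _)
    obtain ⟨s, hs⟩ := ih ((Finset.coe_subset.2 (Finset.subset_insert _ _)).trans hA)
    refine ⟨max s (i + 1), fun x hx => ?_⟩
    rcases Finset.mem_insert.1 hx with rfl | hx
    · exact mem_str.2 ⟨i, by omega, rfl⟩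
    · exact (str_prefix_str f (le_max_left _ _)).subset (hs x hx)

def splice (f g : ℕ → ℕ) (s : ℕ) (i : ℕ) : ℕ := if i < s then f i else g (i - s)

theorem str_splice (f g : ℕ → ℕ) (s : ℕ) : str (splice f g s) s = str f s :=
  List.map_congr_left fun _ hi => if_pos (List.mem_range.1 hi)

theorem isEnum_splice {f g : ℕ → ℕ} {B : Set ℕ} {s : ℕ} (hf : ∀ i < s, f i ∈ B)
    (hg : IsEnum g B) : IsEnum (splice f g s) B := by
  apply subset_antisymm
  · rintro _ ⟨i, rfl⟩
    unfold splice
    split_ifs with hi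
    · exact hf i hi
    · exact hg ▸ ⟨i - s, rfl⟩
  · rw [← hg]
    rintro _ ⟨j, rfl⟩
    exact ⟨s + j, by simp [splice]⟩

end Strings

theorem IndexedFamily.Mem.nonempty {𝓕 : IndexedFamily} {A : Set ℕ} (hA : 𝓕.Mem A) :
    A.Nonempty :=
  let ⟨n, hn⟩ := hA
  hn ▸ 𝓕.nonempty n

theorem IndexedFamily.mi_eq_of_injective {𝓕 : IndexedFamily} (h : Function.Injective 𝓕.F)
    (n : ℕ) : 𝓕.mi (𝓕.F n) = n := by
  rw [IndexedFamily.mi, show {m | 𝓕.F m = 𝓕.F n} = {n} from Set.ext fun m => h.eq_iff,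
    csInf_singleton]

section Growth

open Filter Polynomial

theorem exists_eval_le_mul_pow (p : ℕ[X]) : ∃ C k, ∀ x, 1 ≤ x → p.eval x ≤ C * x ^ k := by
  induction p using Polynomial.induction_on' with
  | add p q hp hq =>
    obtain ⟨C₁, k₁, h₁⟩ := hp
    obtain ⟨C₂, k₂, h₂⟩ := hq
    refine ⟨C₁ + C₂, max k₁ k₂, fun x hx => ?_⟩
    rw [eval_add, add_mul]
    gcongr
    · exact (h₁ x hx).trans (by gcongr; exact le_max_left _ _)
    · exact (h₂ x hx).trans (by gcongr; exact le_max_right _ _)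
  | monomial m a => exact ⟨a, m, fun x _ => (eval_monomial).le⟩

theorem eventually_mul_pow_lt_two_pow (C k : ℕ) : ∀ᶠ n : ℕ in atTop, C * n ^ k < 2 ^ n := by
  have hlim := tendsto_pow_const_div_const_pow_of_one_lt k (one_lt_two (α := ℝ))
  filter_upwards [(tendsto_order.1 hlim).2 _ (inv_pos.2 (Nat.cast_add_one_pos C))] with n hn
  rw [div_lt_iff₀ (by positivity), ← div_eq_inv_mul, lt_div_iff₀ (Nat.cast_add_one_pos C)] at hn
  have hnk : (0 : ℝ) ≤ n ^ k := by positivity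
  have : ((C * n ^ k : ℕ) : ℝ) < 2 ^ n := by
    push_cast
    nlinarith
  exact_mod_cast this

theorem eventually_eval_lt_two_pow (p : ℕ[X]) : ∀ᶠ n in atTop, p.eval n < 2 ^ n := by
  obtain ⟨C, k, hp⟩ := exists_eval_le_mul_pow p
  filter_upwards [eventually_mul_pow_lt_two_pow C k, eventually_ge_atTop 1] with n hn h1
  exact (hp n h1).trans_lt hn

end Growth

def PSDLearnsWith (M : Machine) (p : Polynomial ℕ) (𝓕 : IndexedFamily) : Prop :=
  ∀ A, 𝓕.Mem A → ∀ f, IsEnum f A →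
    ∃ h, 𝓕.F h = A ∧ M.PSDIdentifies (str f) h (p.eval (𝓕.mi A))

theorem PSDLearnsWith.card_lt_eval {M : Machine} {p : Polynomial ℕ} {𝓕 : IndexedFamily}
    (hM : PSDLearnsWith M p 𝓕) {A : Finset ℕ} {B : Set ℕ} (hA : 𝓕.Mem A) (hB : 𝓕.Mem B)
    (hAB : ↑A ⊂ B) : A.card < p.eval (𝓕.mi B) := by
  obtain ⟨f, hf⟩ := exists_isEnum hA.nonempty
  obtain ⟨g, hg⟩ := exists_isEnum hB.nonempty
  obtain ⟨h₁, hh₁, s₁, hsettle₁, -⟩ := hM A hA f hf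
  obtain ⟨s₀, hs₀⟩ := exists_forall_mem_str A hf.superset
  set s := max s₀ s₁
  have hfB : ∀ i < s, f i ∈ B := fun i _ => hAB.subset (hf ▸ ⟨i, rfl⟩)
  obtain ⟨h₂, hh₂, s₂, hsettle₂, hcard⟩ := hM B hB _ (isEnum_splice hfB hg)
  have hs₂ : s < s₂ := by
    by_contra! hle
    have heq := (str_splice f g s ▸ hsettle₂ s hle).symm.trans (hsettle₁ s (le_max_right _ _))
    exact hAB.ne (hh₁ ▸ hh₂ ▸ congrArg 𝓕.F (Part.some_inj.1 heq).symm)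
  calc A.card ≤ (str (splice f g s) s₂).toFinset.card := by
        refine Finset.card_le_card fun x hx => List.mem_toFinset.2 ?_
        refine (str_prefix_str _ hs₂.le).subset ?_
        rw [str_splice]
        exact (str_prefix_str f (le_max_left _ _)).subset (hs₀ x hx)
    _ < p.eval (𝓕.mi B) := hcard

section Computability

theorem primrec_pow : Primrec₂ ((· ^ ·) : ℕ → ℕ → ℕ) :=
  Primrec₂.unpaired'.1 Nat.Primrec.pow

theorem clog_two_eq_findIdx (m : ℕ) :
    Nat.clog 2 m = (List.range (m + 1)).findIdx fun k => decide (m ≤ 2 ^ k) := by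
  have hlt : Nat.clog 2 m < (List.range (m + 1)).length := by
    rw [List.length_range, Nat.lt_succ_iff]
    exact Nat.clog_le_of_le_pow m.lt_two_pow_self.le
  refine ((List.findIdx_eq hlt).2 ⟨?_, fun j hj => ?_⟩).symm
  · simpa using Nat.le_pow_clog one_lt_two m
  · simpa using Nat.pow_lt_of_lt_clog hj

theorem primrec_clog_two : Primrec (Nat.clog 2) :=
  (Primrec.list_findIdx (Primrec.list_range.comp Primrec.succ)
    (Primrec.nat_le.comp Primrec.fst
      (primrec_pow.comp (Primrec.const 2) Primrec.snd)).decide.to₂).of_eq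
    fun m => (clog_two_eq_findIdx m).symm

theorem primrec_foldr_max : Primrec fun l : List ℕ => l.foldr max ⊥ :=
  Primrec.list_foldr Primrec.id (Primrec.const ⊥)
    (Primrec.nat_max.comp (Primrec.fst.comp Primrec.snd) (Primrec.snd.comp Primrec.snd)).to₂

theorem size_le_self (n : ℕ) : n.size ≤ n :=
  Nat.size_le.2 n.lt_two_pow_self

end Computability

theorem foldr_max_le_of_subset {l₁ l₂ : List ℕ} (h : l₁ ⊆ l₂) :
    l₁.foldr max ⊥ ≤ l₂.foldr max ⊥ :=
  List.max_le_of_forall_le _ _ fun _ hx => List.le_max_of_le (h hx) le_rfl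

section DoublingTeacher

def doublingStep (τ : List ℕ) (x : ℕ) : List ℕ :=
  if max (2 * τ.foldr max ⊥) 1 ≤ x then τ ++ [x] else τ

def doublingTeach (σ : List ℕ) : List ℕ := σ.foldl doublingStep []

theorem doublingTeach_append_singleton (σ : List ℕ) (x : ℕ) :
    doublingTeach (σ ++ [x]) = doublingStep (doublingTeach σ) x :=
  List.foldl_concat ..

theorem prefix_doublingStep (τ : List ℕ) (x : ℕ) : τ <+: doublingStep τ x := by
  unfold doublingStep
  split_ifs
  exacts [List.prefix_append _ _, List.prefix_refl _]

theorem doublingTeach_prefix_append (σ ρ : List ℕ) :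
    doublingTeach σ <+: doublingTeach (σ ++ ρ) := by
  induction ρ using List.reverseRecOn with
  | nil => simp
  | append_singleton ρ x ih =>
    rw [← List.append_assoc, doublingTeach_append_singleton]
    exact ih.trans (prefix_doublingStep _ _)

theorem mem_of_mem_doublingTeach {σ : List ℕ} {x : ℕ} (h : x ∈ doublingTeach σ) : x ∈ σ := by
  induction σ using List.reverseRecOn with
  | nil => simp [doublingTeach] at h
  | append_singleton σ y ih =>
    rw [doublingTeach_append_singleton, doublingStep] at h
    split_ifs at h
    · exact List.mem_append.2 ((List.mem_append.1 h).imp_left ih)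
    · exact List.mem_append_left _ (ih h)

theorem two_pow_length_doublingTeach_le (σ : List ℕ) :
    2 ^ (doublingTeach σ).length ≤ max (2 * (doublingTeach σ).foldr max ⊥) 1 := by
  induction σ using List.reverseRecOn with
  | nil => simp [doublingTeach]
  | append_singleton σ x ih =>
    rw [doublingTeach_append_singleton, doublingStep]
    split_ifs with hx
    · have hmax : (doublingTeach σ ++ [x]).foldr max ⊥ = x :=
        le_antisymm (List.max_le_of_forall_le _ _ fun y hy => by
            rcases List.mem_append.1 hy with hy | hy
            · exact (List.le_max_of_le hy le_rfl).trans (by omega)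
            · exact (List.mem_singleton.1 hy).le)
          (List.le_max_of_le (List.mem_append_right _ (List.mem_singleton_self x)) le_rfl)
      rw [hmax, List.length_append, List.length_singleton, pow_succ]
      omega
    · exact ih

theorem lt_two_mul_foldr_max_doublingTeach {σ : List ℕ} {x : ℕ} (hx : x ∈ σ) (hpos : 0 < x) :
    x < 2 * (doublingTeach σ).foldr max ⊥ := by
  induction σ using List.reverseRecOn with
  | nil => simp at hx
  | append_singleton σ y ih =>
    rcases List.mem_append.1 hx with hx | hx
    · have hmono := foldr_max_le_of_subset (doublingTeach_prefix_append σ [y]).subset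
      exact (ih hx).trans_le (by omega)
    · obtain rfl : x = y := List.mem_singleton.1 hx
      rw [doublingTeach_append_singleton, doublingStep]
      split_ifs with hkeep
      · have := List.le_max_of_le
          (List.mem_append_right (doublingTeach σ) (List.mem_singleton_self x)) le_rfl
        omega
      · omega

theorem primrec_doublingTeach : Primrec doublingTeach :=
  Primrec.list_foldl Primrec.id (Primrec.const [])
    (Primrec.ite
      (Primrec.nat_le.comp
        (Primrec.nat_max.comp
          (Primrec.nat_mul.comp (Primrec.const 2)
            (primrec_foldr_max.comp (Primrec.fst.comp Primrec.snd)))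
          (Primrec.const 1))
        (Primrec.snd.comp Primrec.snd))
      (Primrec.list_concat.comp (Primrec.fst.comp Primrec.snd) (Primrec.snd.comp Primrec.snd))
      (Primrec.fst.comp Primrec.snd)).to₂

def doublingTeacher : Teacher where
  t := doublingTeach
  computable := primrec_doublingTeach.to_comp
  mono := fun σ _ ⟨ρ, hρ⟩ => hρ ▸ doublingTeach_prefix_append σ ρ
  content_sub := fun _ _ h => mem_of_mem_doublingTeach h

end DoublingTeacher

theorem clog_two_eq_of_lt_of_le {m n : ℕ} (hlt : 2 ^ n < 2 * m) (hle : m ≤ 2 ^ n) :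
    Nat.clog 2 m = n := by
  refine le_antisymm (Nat.clog_le_of_le_pow hle) (not_lt.1 fun h => ?_)
  obtain ⟨k, rfl⟩ : ∃ k, n = k + 1 := Nat.exists_eq_add_one_of_ne_zero (by omega)
  have := (Nat.clog_le_iff_le_pow one_lt_two).1 (Nat.lt_succ_iff.1 h)
  rw [pow_succ] at hlt
  omega

theorem length_doublingTeach_le {σ : List ℕ} {n : ℕ} (hle : ∀ x ∈ σ, x ≤ 2 ^ n) :
    (doublingTeach σ).length ≤ n + 1 := by
  have hmax := List.max_le_of_forall_le _ _ fun x hx => hle x (mem_of_mem_doublingTeach hx)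
  refine (Nat.pow_le_pow_iff_right one_lt_two).1 ((two_pow_length_doublingTeach_le σ).trans ?_)
  rw [pow_succ]
  have := Nat.one_le_two_pow (n := n)
  omega

theorem clog_foldr_max_doublingTeach {σ : List ℕ} {n : ℕ} (hle : ∀ x ∈ σ, x ≤ 2 ^ n)
    (hmem : 2 ^ n ∈ σ) : Nat.clog 2 ((doublingTeach σ).foldr max ⊥) = n :=
  clog_two_eq_of_lt_of_le (lt_two_mul_foldr_max_doublingTeach hmem (Nat.two_pow_pos n))
    (List.max_le_of_forall_le _ _ fun x hx => hle x (mem_of_mem_doublingTeach hx))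

def clogMaxLearner : Machine where
  eval τ := Part.some (Nat.clog 2 (τ.foldr max ⊥))
  partrec := (primrec_clog_two.comp primrec_foldr_max).to_comp.partrec
  time τ := Part.some (τ.length + τ.foldr max ⊥)
  time_dom _ := by simp
  length_le_time := by
    rintro σ t ⟨-, rfl⟩
    exact Nat.le_add_right _ _
  size_le_time := by
    rintro σ - - ⟨-, rfl⟩ ⟨-, rfl⟩
    calc (Nat.clog 2 (σ.foldr max ⊥)).size ≤ Nat.clog 2 (σ.foldr max ⊥) := size_le_self _
      _ ≤ σ.foldr max ⊥ := Nat.clog_le_of_le_pow Nat.lt_two_pow_self.le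
      _ ≤ σ.length + σ.foldr max ⊥ := Nat.le_add_left _ _
  time_mono := by
    rintro σ τ s t hστ ⟨-, rfl⟩ ⟨-, rfl⟩
    exact add_le_add hστ.length_le (foldr_max_le_of_subset hστ.subset)

section DoublingQueries

/-- After `k` positive answers, ask whether `2 ^ (k + 1)` is in the target; after the first
negative answer, halt with hypothesis `k - 1`. -/
def doublingQuery (x : List ℕ × List Bool) : ℕ :=
  bif x.2.reverse.head?.getD true then 2 * 2 ^ (x.2.length + 1) else 2 * (x.2.length - 1) + 1

theorem primrec_doublingQuery : Primrec doublingQuery :=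
  Primrec.cond
    (Primrec.option_getD.comp (Primrec.list_head?.comp (Primrec.list_reverse.comp Primrec.snd))
      (Primrec.const true))
    (Primrec.nat_mul.comp (Primrec.const 2)
      (primrec_pow.comp (Primrec.const 2)
        (Primrec.succ.comp (Primrec.list_length.comp Primrec.snd))))
    (Primrec.succ.comp (Primrec.nat_mul.comp (Primrec.const 2)
      (Primrec.nat_sub.comp (Primrec.list_length.comp Primrec.snd) (Primrec.const 1))))

theorem doublingQuery_replicate_true (σ : List ℕ) (k : ℕ) :
    doublingQuery (σ, List.replicate k true) = 2 * 2 ^ (k + 1) := by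
  cases k <;> simp [doublingQuery, List.replicate_succ']

theorem doublingQuery_append_false (σ : List ℕ) (l : List Bool) :
    doublingQuery (σ, l ++ [false]) = 2 * l.length + 1 := by
  simp [doublingQuery]

theorem size_doublingQuery_le (x : List ℕ × List Bool) :
    (doublingQuery x).size ≤ x.1.length + 2 * x.2.length + 3 := by
  unfold doublingQuery
  cases x.2.reverse.head?.getD true
  · have := size_le_self (2 * (x.2.length - 1) + 1)
    simp only [cond_false]
    omega
  · rw [cond_true, ← pow_succ', Nat.size_pow]
    omega

def doublingLearner : OMachine where
  step x := Part.some (doublingQuery x)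
  partrec := primrec_doublingQuery.to_comp.partrec
  time x := Part.some (x.1.length + 2 * x.2.length + 3)
  time_dom _ := by simp
  length_le_time := by
    rintro x t ⟨-, rfl⟩
    dsimp; omega
  queries_le_time := by
    rintro x t ⟨-, rfl⟩
    dsimp; omega
  size_le_time := by
    rintro x t v ⟨-, rfl⟩ ⟨-, rfl⟩
    exact size_doublingQuery_le x
  time_mono := by
    rintro σ τ a b s t hστ hab ⟨-, rfl⟩ ⟨-, rfl⟩
    have := hστ.length_le
    have := hab.length_le
    dsimp; omega

theorem doublingLearner_reach_replicate_true {A : Set ℕ} {σ : List ℕ} {n : ℕ}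
    (hin : ∀ k < n, 2 ^ (k + 1) ∈ A) : ∀ k ≤ n, doublingLearner.Reach A σ (List.replicate k true)
  | 0, _ => .nil
  | k + 1, hk => by
    have := OMachine.Reach.query (q := 2 ^ (k + 1))
      (doublingLearner_reach_replicate_true hin k (by omega))
      (Part.mem_some_iff.2 (doublingQuery_replicate_true σ k).symm)
    rwa [decide_eq_true (hin k hk), ← List.replicate_succ'] at this

theorem doublingLearner_out {A : Set ℕ} {σ : List ℕ} {n : ℕ} (hin : ∀ k < n, 2 ^ (k + 1) ∈ A)
    (hout : 2 ^ (n + 1) ∉ A) :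
    doublingLearner.Out A σ n (List.replicate n true ++ [false]) := by
  refine ⟨?_, Part.mem_some_iff.2 ?_⟩
  · have := OMachine.Reach.query (q := 2 ^ (n + 1))
      (doublingLearner_reach_replicate_true hin n le_rfl)
      (Part.mem_some_iff.2 (doublingQuery_replicate_true σ n).symm)
    rwa [decide_eq_false hout] at this
  · rw [doublingQuery_append_false, List.length_replicate]

end DoublingQueries

section PowerIntervals

open Polynomial

variable {𝓕 : IndexedFamily}

theorem mi_F_of_eq_Icc (hF : ∀ n, 𝓕.F n = Set.Icc 0 (2 ^ n)) (n : ℕ) : 𝓕.mi (𝓕.F n) = n :=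
  IndexedFamily.mi_eq_of_injective (fun m k h => Nat.pow_right_injective le_rfl
    ((Set.Icc_eq_Icc_iff (Nat.zero_le _)).1 (by rwa [hF, hF] at h)).2) n

theorem psdo_of_eq_Icc (hF : ∀ n, 𝓕.F n = Set.Icc 0 (2 ^ n)) : PSDO 𝓕 := by
  refine ⟨doublingLearner, X + 2, ?_⟩
  rintro _ ⟨n, rfl⟩ f -
  have hin : ∀ k < n, 2 ^ (k + 1) ∈ 𝓕.F n := fun k hk =>
    hF n ▸ ⟨Nat.zero_le _, Nat.pow_le_pow_right two_pos hk⟩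
  have hout : 2 ^ (n + 1) ∉ 𝓕.F n := fun h =>
    (Nat.pow_lt_pow_right one_lt_two n.lt_succ_self).not_ge (hF n ▸ h).2
  refine ⟨n, rfl, 0, fun m _ => ⟨_, doublingLearner_out hin hout⟩, ?_, _,
    doublingLearner_out hin hout, ?_⟩ <;>
  simp [mi_F_of_eq_Icc hF, str]

theorem psdt_of_eq_Icc (hF : ∀ n, 𝓕.F n = Set.Icc 0 (2 ^ n)) : PSDT 𝓕 := by
  refine ⟨clogMaxLearner, doublingTeacher, X + 2, ?_⟩
  rintro _ ⟨n, rfl⟩ f hf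
  have hle : ∀ m, ∀ x ∈ str f m, x ≤ 2 ^ n := fun m x hx => by
    obtain ⟨i, -, rfl⟩ := mem_str.1 hx
    exact (hF n ▸ hf ▸ Set.mem_range_self i : f i ∈ Set.Icc 0 (2 ^ n)).2
  obtain ⟨i, hi⟩ : 2 ^ n ∈ Set.range f := hf ▸ hF n ▸ ⟨Nat.zero_le _, le_rfl⟩
  refine ⟨n, rfl, i + 1, fun m hm => ?_, ?_⟩
  · exact congrArg Part.some (clog_foldr_max_doublingTeach (hle m)
      ((str_prefix_str f hm).subset (mem_str.2 ⟨i, by omega, hi⟩)))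
  · calc (doublingTeach (str f (i + 1))).toFinset.card
        ≤ (doublingTeach (str f (i + 1))).length := List.toFinset_card_le _
      _ < (X + 2 : ℕ[X]).eval (𝓕.mi (𝓕.F n)) := by
        simp only [eval_add, eval_X, eval_ofNat, mi_F_of_eq_Icc hF]
        exact Nat.lt_succ_of_le (length_doublingTeach_le (hle (i + 1)))

theorem not_psd_of_eq_Icc (hF : ∀ n, 𝓕.F n = Set.Icc 0 (2 ^ n)) : ¬ PSD 𝓕 := by
  rintro ⟨M, p, hM⟩
  obtain ⟨n, hn⟩ := (eventually_eval_lt_two_pow (p.comp (X + 1))).exists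
  have hsub : (↑(Finset.Icc 0 (2 ^ n)) : Set ℕ) ⊂ 𝓕.F (n + 1) := by
    rw [Finset.coe_Icc, hF]
    exact Set.Icc_ssubset_Icc_right (Nat.zero_le _) le_rfl
      (Nat.pow_lt_pow_right one_lt_two n.lt_succ_self)
  have := PSDLearnsWith.card_lt_eval hM ⟨n, by rw [hF, Finset.coe_Icc]⟩ ⟨n + 1, rfl⟩ hsub
  simp only [Nat.card_Icc, mi_F_of_eq_Icc hF] at this
  simp only [eval_comp, eval_add, eval_X, eval_one] at hn
  omega

end PowerIntervals

/-- The indexed family with `F_n = [0, 2^n]` is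
PSD[O]-learnable and PSD[T]-learnable, but not PSD-learnable. -/
theorem stmt8 (𝓕 : IndexedFamily) (hF : ∀ n, 𝓕.F n = Set.Icc 0 (2 ^ n)) :
    PSDO 𝓕 ∧ PSDT 𝓕 ∧ ¬ PSD 𝓕 :=
  ⟨psdo_of_eq_Icc hF, psdt_of_eq_Icc hF, not_psd_of_eq_Icc hF⟩

end TeachLearn
end

section
/- There is an indexed family that is PSD[T]-learnable but not PSD[O]-learnable. -/
/-!
Common framework: indexed families of c.e. sets, enumerations (texts),
learning machines with run-time, membership-oracle machines, teachers,
and the learning criteria PRT/PSD/PMC/PCS with oracle/teacher variants.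
-/

namespace TeachLearn

attribute [local instance] Classical.propDecidable

/-!
Besides `Evens`, the family contains, for each program `c`, the set `Evens ∪ {2t+1}` where `t`
is the exact halting time of `c` on input `0` (just `Evens` if `c` diverges). A teacher passing
on only the odd data shows the learner at most the single number `2t+1`, from which it finds
some program halting at time `t`; halting times are unique, so that program indexes the same set.

An oracle learner with polynomial bound `p` has converged on the enumeration `0, 2, 4, …` of
`Evens` by some stage `n₀`. On an enumeration of the set with index `k+1` that lists the evens
in order and shows `2t+1` only after stage `n₀ + p(k+1)`, it must also have converged by that
stage, since it has seen at most `p(k+1)` distinct data. There the two inputs coincide, so the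
output with the (decidable) oracle for the `(k+1)`-st set differs from the `Evens` hypothesis
exactly when program `k` halts: the halting problem would be decidable.
-/

open Nat.Partrec (Code)

section HaltingTime

open Nat.Partrec.Code

def HaltsAt (c : Code) (t : ℕ) : Prop := c.evaln t 0 = none ∧ c.evaln (t + 1) 0 ≠ none

lemma HaltsAt.unique {c : Code} {t t' : ℕ} (h : HaltsAt c t) (h' : HaltsAt c t') : t = t' := by
  by_contra hne
  wlog hlt : t < t' generalizing t t'
  · exact this h' h (Ne.symm hne) (by omega)
  obtain ⟨x, hx⟩ := Option.ne_none_iff_exists'.1 h.2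
  have := evaln_mono hlt hx
  simp [h'.1] at this

lemma dom_eval_iff_exists_haltsAt {c : Code} : (c.eval 0).Dom ↔ ∃ t, HaltsAt c t := by
  constructor
  · intro h
    obtain ⟨s, hs⟩ := evaln_complete.1 (Part.get_mem h)
    have hex : ∃ s, c.evaln s 0 ≠ none := ⟨s, Option.ne_none_iff_exists'.2 ⟨_, hs⟩⟩
    obtain ⟨t, ht⟩ : ∃ t, Nat.find hex = t + 1 :=
      Nat.exists_eq_add_one.2 <| Nat.pos_of_ne_zero fun h0 => by
        simpa [h0, evaln] using Nat.find_spec hex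
    exact ⟨t, not_not.1 (Nat.find_min hex (ht ▸ t.lt_succ_self)), ht ▸ Nat.find_spec hex⟩
  · rintro ⟨t, -, ht⟩
    obtain ⟨x, hx⟩ := Option.ne_none_iff_exists'.1 ht
    exact Part.dom_iff_mem.2 ⟨x, evaln_sound hx⟩

lemma primrecRel_haltsAt : PrimrecRel HaltsAt := by
  have hev (g : Code × ℕ → ℕ) (hg : Primrec g) : Primrec fun p : Code × ℕ => p.1.evaln (g p) 0 :=
    primrec_evaln.comp (Primrec.pair (hg.pair Primrec.fst) (Primrec.const 0))
  exact PrimrecPred.and (Primrec.eq.comp (hev _ Primrec.snd) (Primrec.const none))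
    (PrimrecPred.not
      (Primrec.eq.comp (hev _ (Primrec.succ.comp Primrec.snd)) (Primrec.const none)))

end HaltingTime

def Evens : Set ℕ := {x | x % 2 = 0}

lemma odd_not_mem_evens (t : ℕ) : 2 * t + 1 ∉ Evens := by
  simp [Evens]

lemma insert_odd_evens_ne (t : ℕ) : insert (2 * t + 1) Evens ≠ Evens :=
  fun h => odd_not_mem_evens t (h ▸ Set.mem_insert _ _)

def haltSet : ℕ → Set ℕ
  | 0 => Evens
  | k + 1 => Evens ∪ {x | x % 2 = 1 ∧ HaltsAt (Denumerable.ofNat Code k) (x / 2)}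

lemma haltSet_succ_of_haltsAt {k t : ℕ} (h : HaltsAt (Denumerable.ofNat Code k) t) :
    haltSet (k + 1) = insert (2 * t + 1) Evens := by
  ext x
  simp only [haltSet, Set.mem_union, Set.mem_ofPred_eq, Set.mem_insert_iff, Evens]
  constructor
  · rintro (hx | ⟨hx, hxt⟩)
    · exact Or.inr hx
    · have := hxt.unique h
      omega
  · rintro (rfl | hx)
    · exact Or.inr ⟨by omega, by rwa [show (2 * t + 1) / 2 = t by omega]⟩
    · exact Or.inl hx

lemma haltSet_succ_of_not_dom {k : ℕ} (h : ¬((Denumerable.ofNat Code k).eval 0).Dom) :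
    haltSet (k + 1) = Evens := by
  rw [dom_eval_iff_exists_haltsAt, not_exists] at h
  simp [haltSet, h]

lemma primrecRel_mem_haltSet : PrimrecRel fun x n => x ∈ haltSet n := by
  have hodd : PrimrecPred fun p : ℕ × ℕ => p.1 % 2 = 1 :=
    Primrec.eq.comp (Primrec.nat_mod.comp Primrec.fst (Primrec.const 2)) (Primrec.const 1)
  have heven : PrimrecPred fun p : ℕ × ℕ => p.1 % 2 = 0 :=
    Primrec.eq.comp (Primrec.nat_mod.comp Primrec.fst (Primrec.const 2)) (Primrec.const 0)
  have hhalt : PrimrecPred fun p : ℕ × ℕ =>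
      HaltsAt (Denumerable.ofNat Code (p.2 - 1)) (p.1 / 2) :=
    primrecRel_haltsAt.comp ((Primrec.ofNat Code).comp (Primrec.pred.comp Primrec.snd))
      (Primrec.nat_div.comp Primrec.fst (Primrec.const 2))
  have hpos : PrimrecPred fun p : ℕ × ℕ => 0 < p.2 :=
    Primrec.nat_lt.comp (Primrec.const 0) Primrec.snd
  refine (heven.or (hpos.and (hodd.and hhalt))).of_eq fun ⟨x, n⟩ => ?_
  cases n <;> simp [haltSet, Evens]

def haltFamily : IndexedFamily where
  F := haltSet
  nonempty n := ⟨0, by cases n <;> simp [haltSet, Evens]⟩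
  uce := primrecRel_mem_haltSet.computablePred.to_re

lemma haltFamily_mem_cases {A : Set ℕ} (hA : haltFamily.Mem A) :
    A = Evens ∨ ∃ k t, HaltsAt (Denumerable.ofNat Code k) t ∧ A = insert (2 * t + 1) Evens := by
  obtain ⟨_ | k, rfl⟩ := hA
  · exact Or.inl rfl
  · by_cases hk : ((Denumerable.ofNat Code k).eval 0).Dom
    · obtain ⟨t, ht⟩ := dom_eval_iff_exists_haltsAt.1 hk
      exact Or.inr ⟨k, t, ht, haltSet_succ_of_haltsAt ht⟩
    · exact Or.inl (haltSet_succ_of_not_dom hk)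

noncomputable def Machine.ofPartrec (ev : List ℕ →. ℕ) (hev : Partrec ev) : Machine where
  eval := ev
  partrec := hev
  -- a run-time need not be computable; the sup over all prefixes makes it monotone
  time σ := (ev σ).map fun _ =>
    σ.length + σ.inits.toFinset.sup fun τ => ((ev τ).getOrElse 0).size
  time_dom _ := Iff.rfl
  length_le_time := by
    rintro σ _ ⟨_, rfl⟩
    exact Nat.le_add_right _ _
  size_le_time := by
    rintro σ _ h ⟨_, rfl⟩ hh
    have hget : (ev σ).getOrElse 0 = h := by
      rw [Part.getOrElse_of_dom _ (Part.dom_iff_mem.2 ⟨h, hh⟩)]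
      exact Part.get_eq_of_mem hh _
    refine le_add_left (hget ▸ Finset.le_sup (f := fun τ => ((ev τ).getOrElse 0).size) ?_)
    simp [List.mem_inits]
  time_mono := by
    rintro σ τ _ _ hστ ⟨_, rfl⟩ ⟨_, rfl⟩
    refine add_le_add hστ.length_le (Finset.sup_mono fun ρ hρ => ?_)
    simp only [List.mem_toFinset, List.mem_inits] at hρ ⊢
    exact hρ.trans hστ

def oddTeacher : Teacher where
  t σ := σ.filter fun x => x % 2 = 1
  computable := (Primrec.listFilter (Primrec.eq.comp (Primrec.nat_mod.comp Primrec.id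
    (Primrec.const 2)) (Primrec.const 1))).to_comp
  mono _ _ h := h.filter _
  content_sub _ _ hx := (List.mem_filter.1 hx).1

lemma mem_oddTeacher_str {f : ℕ → ℕ} {m x : ℕ} :
    x ∈ oddTeacher.t (str f m) ↔ x % 2 = 1 ∧ ∃ i < m, f i = x := by
  simp [oddTeacher, str, and_comm]

lemma odd_mem_of_mem_oddTeacher_str {f : ℕ → ℕ} {A : Set ℕ} {m x : ℕ} (hf : IsEnum f A)
    (hx : x ∈ oddTeacher.t (str f m)) : x % 2 = 1 ∧ x ∈ A := by
  obtain ⟨hodd, i, -, rfl⟩ := mem_oddTeacher_str.1 hx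
  exact ⟨hodd, hf ▸ Set.mem_range_self i⟩

noncomputable def haltLearner : List ℕ →. ℕ
  | [] => Part.some 0
  | x :: _ => (Nat.rfind fun n => Part.some
      (decide (HaltsAt (Denumerable.ofNat Code n) (x / 2)))).map Nat.succ

lemma partrec_haltLearner : Partrec haltLearner := by
  have hsearch : Partrec₂ fun (_ : List ℕ) (x : ℕ) => (Nat.rfind fun n => Part.some
      (decide (HaltsAt (Denumerable.ofNat Code n) (x / 2)))).map Nat.succ := by
    have hfound : Computable₂ fun (x n : ℕ) =>
        decide (HaltsAt (Denumerable.ofNat Code n) (x / 2)) :=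
      (primrecRel_haltsAt.decide.comp ((Primrec.ofNat Code).comp Primrec.snd)
        (Primrec.nat_div.comp Primrec.fst (Primrec.const 2))).to_comp
    exact ((Partrec.rfind hfound.partrec₂).map
      (Primrec.succ.comp Primrec.snd).to_comp.to₂).comp Computable.snd
  exact (Partrec.optionCasesOn_right Primrec.list_head?.to_comp (Computable.const 0)
    hsearch).of_eq fun σ => by cases σ <;> rfl

lemma haltLearner_cons {t : ℕ} (ht : ∃ k, HaltsAt (Denumerable.ofNat Code k) t) :
    ∃ k, HaltsAt (Denumerable.ofNat Code k) t ∧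
      ∀ σ, haltLearner ((2 * t + 1) :: σ) = Part.some (k + 1) := by
  obtain ⟨k, hk⟩ := ht
  obtain ⟨n, hn, -⟩ := Nat.rfind_min'
    (p := fun n => decide (HaltsAt (Denumerable.ofNat Code n) t)) (by simpa using hk)
  refine ⟨n, by simpa using Nat.rfind_spec hn, fun σ => Part.eq_some_iff.2 ?_⟩
  simp only [haltLearner, show (2 * t + 1) / 2 = t by omega]
  exact Part.mem_map _ hn

theorem psdt_haltFamily : PSDT haltFamily := by
  refine ⟨Machine.ofPartrec haltLearner partrec_haltLearner, oddTeacher, 2, ?_⟩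
  intro A hA f hf
  simp only [Polynomial.eval_ofNat]
  rcases haltFamily_mem_cases hA with rfl | ⟨k, t, hkt, rfl⟩
  · have hnil : ∀ m, oddTeacher.t (str f m) = [] := fun m =>
      List.eq_nil_iff_forall_not_mem.2 fun x hx => by
        obtain ⟨hodd, heven⟩ := odd_mem_of_mem_oddTeacher_str hf hx
        simp only [Evens, Set.mem_ofPred_eq] at heven
        omega
    refine ⟨0, rfl, 0, fun m _ => ?_, by simp [hnil]⟩
    show haltLearner (oddTeacher.t (str f m)) = _
    rw [hnil]
    rfl
  · obtain ⟨n, hnt, hlearn⟩ := haltLearner_cons ⟨k, hkt⟩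
    obtain ⟨i₀, hi₀⟩ : 2 * t + 1 ∈ Set.range f := hf ▸ Set.mem_insert _ _
    have honly : ∀ m, ∀ x ∈ oddTeacher.t (str f m), x = 2 * t + 1 := fun m x hx => by
      obtain ⟨hodd, hx⟩ := odd_mem_of_mem_oddTeacher_str hf hx
      simp only [Set.mem_insert_iff, Evens, Set.mem_ofPred_eq] at hx
      omega
    refine ⟨n + 1, haltSet_succ_of_haltsAt hnt, i₀ + 1, fun m hm => ?_, ?_⟩
    · obtain ⟨x, σ, hxσ⟩ := List.exists_cons_of_ne_nil (List.ne_nil_of_mem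
        ((mem_oddTeacher_str (f := f) (m := m) (x := 2 * t + 1)).2 ⟨by omega, i₀, by omega, hi₀⟩))
      show haltLearner (oddTeacher.t (str f m)) = _
      rw [hxσ, honly m x (hxσ ▸ List.mem_cons_self)]
      exact hlearn σ
    · calc (oddTeacher.t (str f (i₀ + 1))).toFinset.card
          ≤ ({2 * t + 1} : Finset ℕ).card :=
            Finset.card_le_card fun x hx =>
              Finset.mem_singleton.2 (honly _ x (List.mem_toFinset.1 hx))
        _ < 2 := by simp

namespace OMachine

variable {α : Type*} (M : OMachine) (o : α → ℕ → Bool) (σ : α → List ℕ)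

def runStep : α × List Bool →. ℕ ⊕ (α × List Bool) := fun s =>
  (M.step (σ s.1, s.2)).map fun v =>
    if v % 2 = 1 then Sum.inl (v / 2) else Sum.inr (s.1, s.2 ++ [o s.1 (v / 2)])

def run : α →. ℕ := fun a => (M.runStep o σ).fix (a, [])

variable {M o σ}

lemma partrec_run [Primcodable α] (ho : Computable₂ o) (hσ : Computable σ) :
    Partrec (M.run o σ) := by
  have hstep : Partrec fun s : α × List Bool => M.step (σ s.1, s.2) :=
    M.partrec.comp ((hσ.comp Computable.fst).pair Computable.snd)
  have hhalf : Computable fun p : (α × List Bool) × ℕ => p.2 / 2 :=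
    (Primrec.nat_div.comp Primrec.snd (Primrec.const 2)).to_comp
  have hodd : Computable fun p : (α × List Bool) × ℕ => decide (p.2 % 2 = 1) :=
    (Primrec.eq.comp (Primrec.nat_mod.comp Primrec.snd (Primrec.const 2))
      (Primrec.const 1)).decide.to_comp
  have hcont : Computable₂ fun (s : α × List Bool) (v : ℕ) =>
      (if v % 2 = 1 then Sum.inl (v / 2) else Sum.inr (s.1, s.2 ++ [o s.1 (v / 2)]) :
        ℕ ⊕ (α × List Bool)) :=
    (Computable.cond hodd (Computable.sumInl.comp hhalf)
      (Computable.sumInr.comp ((Computable.fst.comp Computable.fst).pair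
        (Computable.list_concat.comp (Computable.snd.comp Computable.fst)
          (ho.comp (Computable.fst.comp Computable.fst) hhalf))))).of_eq
      fun _ => Bool.cond_decide _ _ _
  exact ((hstep.map hcont).fix).comp (Computable.id.pair (Computable.const []))

lemma query_mem_runStep {a : α} {ans : List Bool} {q : ℕ} (hq : 2 * q ∈ M.step (σ a, ans)) :
    Sum.inr (a, ans ++ [o a q]) ∈ M.runStep o σ (a, ans) :=
  (Part.mem_map_iff _).2 ⟨_, hq, by simp⟩

lemma halt_mem_runStep {a : α} {ans : List Bool} {h : ℕ} (hh : 2 * h + 1 ∈ M.step (σ a, ans)) :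
    Sum.inl h ∈ M.runStep o σ (a, ans) :=
  (Part.mem_map_iff _).2 ⟨_, hh, by simp; omega⟩

lemma fix_runStep_eq_of_reach {a : α} {ans : List Bool}
    (h : M.Reach {q | o a q = true} (σ a) ans) :
    (M.runStep o σ).fix (a, []) = (M.runStep o σ).fix (a, ans) := by
  induction h with
  | nil => rfl
  | query _ hq ih => simpa [ih] using PFun.fix_fwd_eq (query_mem_runStep hq)

lemma mem_run_of_out {a : α} {h : ℕ} {ans : List Bool}
    (hout : M.Out {q | o a q = true} (σ a) h ans) : h ∈ M.run o σ a := by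
  rw [run, fix_runStep_eq_of_reach hout.1]
  exact PFun.fix_stop (halt_mem_runStep hout.2)

end OMachine

lemma _root_.Polynomial.primrec_eval (p : Polynomial ℕ) : Primrec fun n => p.eval n := by
  induction p using Polynomial.induction_on' with
  | add f g hf hg => exact (Primrec.nat_add.comp hf hg).of_eq fun n => by simp
  | monomial e a =>
    have hpow : Primrec fun n : ℕ => n ^ e := by
      induction e with
      | zero => simpa using Primrec.const 1
      | succ e ih => simpa [pow_succ] using Primrec.nat_mul.comp ih Primrec.id
    simpa using Primrec.nat_mul.comp (Primrec.const a) hpow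

lemma _root_.Polynomial.eval_mono_nat (p : Polynomial ℕ) : Monotone fun n => p.eval n :=
  fun a b h => by
    simp only [Polynomial.eval_eq_sum_range]
    exact Finset.sum_le_sum fun i _ => Nat.mul_le_mul_left _ (Nat.pow_le_pow_left h i)

section Enumerations

def insertAt (f : ℕ → ℕ) (L x : ℕ) (i : ℕ) : ℕ :=
  if i < L then f i else if i = L then x else f (i - 1)

variable {f : ℕ → ℕ} {A : Set ℕ} {L x : ℕ}

lemma isEnum_insertAt (hf : IsEnum f A) : IsEnum (insertAt f L x) (insert x A) := by
  unfold IsEnum at hf ⊢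
  subst hf
  ext y
  simp only [insertAt, Set.mem_range, Set.mem_insert_iff]
  constructor
  · rintro ⟨i, rfl⟩
    split_ifs
    exacts [Or.inr ⟨i, rfl⟩, Or.inl rfl, Or.inr ⟨i - 1, rfl⟩]
  · rintro (rfl | ⟨i, rfl⟩)
    · exact ⟨L, by simp⟩
    · by_cases hi : i < L
      · exact ⟨i, by simp [hi]⟩
      · exact ⟨i + 1, by simp [show ¬ i + 1 < L by omega, show i + 1 ≠ L by omega]⟩

lemma injective_insertAt (hf : Function.Injective f) (hx : x ∉ Set.range f) :
    Function.Injective (insertAt f L x) := by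
  intro i j hij
  simp only [insertAt] at hij
  simp only [Set.mem_range, not_exists] at hx
  split_ifs at hij <;> grind [Function.Injective]

lemma str_insertAt {m : ℕ} (hm : m ≤ L) : str (insertAt f L x) m = str f m :=
  List.map_congr_left fun i hi => if_pos (by simp at hi; omega)

lemma card_toFinset_str (hf : Function.Injective f) (n : ℕ) : (str f n).toFinset.card = n := by
  rw [str, List.toFinset_card_of_nodup (List.nodup_range.map hf), List.length_map,
    List.length_range]

end Enumerations

lemma IndexedFamily.mi_le (𝓕 : IndexedFamily) (n : ℕ) : 𝓕.mi (𝓕.F n) ≤ n :=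
  Nat.sInf_le rfl

def PSDOLearnsWith (M : OMachine) (p : Polynomial ℕ) (𝓕 : IndexedFamily) : Prop :=
  ∀ A, 𝓕.Mem A → ∀ f, IsEnum f A →
    ∃ h, 𝓕.F h = A ∧ M.PSDIdentifies A (str f) h (p.eval (𝓕.mi A))

lemma PSDOLearnsWith.exists_out_of_injective {M : OMachine} {p : Polynomial ℕ}
    {𝓕 : IndexedFamily} (hM : PSDOLearnsWith M p 𝓕) {A : Set ℕ} (hA : 𝓕.Mem A) {g : ℕ → ℕ}
    (hg : IsEnum g A) (hinj : Function.Injective g) {m : ℕ} (hm : p.eval (𝓕.mi A) ≤ m) :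
    ∃ h ans, 𝓕.F h = A ∧ M.Out A (str g m) h ans := by
  obtain ⟨h, hFh, n, hset, hcard, -⟩ := hM A hA g hg
  rw [card_toFinset_str hinj] at hcard
  obtain ⟨ans, hout⟩ := hset m (by omega)
  exact ⟨h, ans, hFh, hout⟩

lemma primrec_str {f : ℕ → ℕ} (hf : Primrec f) : Primrec (str f) :=
  Primrec.list_map Primrec.list_range (hf.comp Primrec.snd).to₂

lemma isEnum_two_mul_evens : IsEnum (2 * ·) Evens := by
  ext x
  simp only [Set.mem_range, Evens, Set.mem_ofPred_eq]
  exact ⟨by rintro ⟨i, rfl⟩; omega, fun hx => ⟨x / 2, by omega⟩⟩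

lemma exists_out_haltSet_ne_iff_halts {M : OMachine} {p : Polynomial ℕ}
    (hM : PSDOLearnsWith M p haltFamily) {h₀ n₀ : ℕ} (hh₀ : haltSet h₀ = Evens)
    (hset : ∀ m, n₀ ≤ m → ∃ ans, M.Out Evens (str (2 * ·) m) h₀ ans) (k : ℕ) :
    ∃ h ans, M.Out (haltSet (k + 1)) (str (2 * ·) (n₀ + p.eval (k + 1))) h ans ∧
      (((Denumerable.ofNat Code k).eval 0).Dom ↔ h ≠ h₀) := by
  by_cases hk : ((Denumerable.ofNat Code k).eval 0).Dom
  · obtain ⟨t, ht⟩ := dom_eval_iff_exists_haltsAt.1 hk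
    have hA := haltSet_succ_of_haltsAt ht
    have hmi : p.eval (haltFamily.mi (insert (2 * t + 1) Evens)) ≤ n₀ + p.eval (k + 1) :=
      le_add_left (p.eval_mono_nat (hA ▸ haltFamily.mi_le (k + 1)))
    have hodd : 2 * t + 1 ∉ Set.range (2 * ·) := by
      rintro ⟨i, hi⟩
      dsimp only at hi
      omega
    obtain ⟨h, ans, hFh, hout⟩ := hM.exists_out_of_injective ⟨k + 1, hA⟩
      (isEnum_insertAt isEnum_two_mul_evens)
      (injective_insertAt (mul_right_injective₀ two_ne_zero) hodd) hmi
    rw [str_insertAt le_rfl] at hout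
    refine ⟨h, ans, hA ▸ hout, iff_of_true hk ?_⟩
    rintro rfl
    exact insert_odd_evens_ne t (hFh.symm.trans hh₀)
  · obtain ⟨ans, hout⟩ := hset _ (Nat.le_add_right _ _)
    exact ⟨h₀, ans, haltSet_succ_of_not_dom hk ▸ hout, iff_of_false hk (not_not.2 rfl)⟩

theorem not_psdo_haltFamily : ¬ PSDO haltFamily := by
  rintro ⟨M, p, hM⟩
  obtain ⟨h₀, hh₀, n₀, hset, -⟩ := hM Evens ⟨0, rfl⟩ _ isEnum_two_mul_evens
  let decider := M.run (fun k q => decide (q ∈ haltSet (k + 1)))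
    (fun k => str (2 * ·) (n₀ + p.eval (k + 1)))
  have hdecider : Partrec decider := OMachine.partrec_run
    (primrecRel_mem_haltSet.decide.comp Primrec.snd (Primrec.succ.comp Primrec.fst)).to_comp
    ((primrec_str (Primrec.nat_mul.comp (Primrec.const 2) Primrec.id)).comp
      (Primrec.nat_add.comp (Primrec.const n₀) ((p.primrec_eval).comp Primrec.succ))).to_comp
  apply ComputablePred.halting_problem 0
  refine ⟨inferInstance, ((hdecider.comp Computable.encode).map
    (Primrec.eq.comp Primrec.snd (Primrec.const h₀)).not.decide.to_comp.to₂).of_eq_tot fun c => ?_⟩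
  obtain ⟨h, ans, hout, hiff⟩ := exists_out_haltSet_ne_iff_halts hM hh₀ hset (Encodable.encode c)
  rw [Denumerable.ofNat_encode] at hiff
  refine Part.mem_map_iff _ |>.2 ⟨h, OMachine.mem_run_of_out (by simpa using hout), ?_⟩
  simp [hiff]

/-- There is an indexed family which is PSD[T]-learnable but
not PSD[O]-learnable. -/
theorem stmt9 : ∃ 𝓕 : IndexedFamily, PSDT 𝓕 ∧ ¬ PSDO 𝓕 :=
  ⟨haltFamily, psdt_haltFamily, not_psdo_haltFamily⟩

end TeachLearn
end
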